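/- In the free abelian group on generators x_{ij} for 1 ≤ i < j ≤ 4, equipped with the bilinear form making the x_{ij} orthogonal with x_{ij}·x_{ij} = −1, the subgroup of cycles (kernel of the map x_{ij} ↦ y_i + y_j into the free abelian group on y_1,...,y_4) is free of rank 2, generated by α = x_{12}+x_{34}−x_{13}−x_{24} and β = x_{14}+x_{23}−x_{12}−x_{34}, and the Gram matrix of the form restricted to (α, β) is [[−4, 2], [2, −4]], which is negative definite. -/

import Mathlib

/-- Standard basis of `ℤ^6`; coordinates `0,…,5` correspond to the 2-handle classes
`x_{12}, x_{13}, x_{14}, x_{23}, x_{24}, x_{34}`. -/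
def xb (i : Fin 6) : Fin 6 → ℤ := Pi.single i 1

/-- The boundary matrix: `x_{ij} ↦ y_i + y_j` (rows `y_1,…,y_4`, columns the pairs). -/
def bdry : Matrix (Fin 4) (Fin 6) ℤ :=
  !![1,1,1,0,0,0; 1,0,0,1,1,0; 0,1,0,1,0,1; 0,0,1,0,1,1]

/-- The form making the `x_{ij}` orthogonal of square `-1`. -/
def Bform (v w : Fin 6 → ℤ) : ℤ := -∑ i, v i * w i

noncomputable def alphaT2 : Fin 6 → ℤ := xb 0 + xb 5 - xb 1 - xb 4
noncomputable def betaT2 : Fin 6 → ℤ := xb 2 + xb 3 - xb 0 - xb 5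

/-!
A 2-chain `v` is a cycle iff it satisfies the four vertex equations of `K₄`. Among `α` and `β`,
only `α` involves `x₁₃` and only `β` involves `x₁₄`, so a cycle can only be `-v₁₃ • α + v₁₄ • β`,
and the vertex equations show that it is. The form restricted to `a • α + b • β` is
`-4 (a² - a b + b²)`, and `4 (a² - a b + b²) = (2b - a)² + 3a²`.
-/

open Matrix

lemma alphaT2_eq : alphaT2 = ![1, -1, 0, 0, -1, 1] := by
  funext i; fin_cases i <;> rfl

lemma betaT2_eq : betaT2 = ![-1, 0, 1, 1, 0, -1] := by
  funext i; fin_cases i <;> rfl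

lemma bdry_mulVec_alphaT2 : bdry *ᵥ alphaT2 = 0 := by
  rw [alphaT2_eq]; decide

lemma bdry_mulVec_betaT2 : bdry *ᵥ betaT2 = 0 := by
  rw [betaT2_eq]; decide

lemma eq_of_bdry_mulVec_eq_zero {v : Fin 6 → ℤ} (hv : bdry *ᵥ v = 0) :
    v = (-v 1) • alphaT2 + v 2 • betaT2 := by
  have h0 := congrFun hv 0
  have h1 := congrFun hv 1
  have h2 := congrFun hv 2
  have h3 := congrFun hv 3
  simp [bdry, mulVec, dotProduct, Fin.sum_univ_six] at h0 h1 h2 h3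
  funext i
  fin_cases i <;> simp [alphaT2_eq, betaT2_eq] <;> omega

lemma ker_bdry : LinearMap.ker bdry.mulVecLin = Submodule.span ℤ {alphaT2, betaT2} := by
  refine le_antisymm (fun v hv => ?_) ?_
  · rw [Submodule.mem_span_pair]
    exact ⟨-v 1, v 2, (eq_of_bdry_mulVec_eq_zero hv).symm⟩
  · rw [Submodule.span_le, Set.insert_subset_iff, Set.singleton_subset_iff]
    exact ⟨bdry_mulVec_alphaT2, bdry_mulVec_betaT2⟩

lemma linearIndependent_alphaT2_betaT2 : LinearIndependent ℤ ![alphaT2, betaT2] := by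
  rw [LinearIndependent.pair_iff]
  intro s t h
  have h1 := congrFun h 1
  have h2 := congrFun h 2
  simp [alphaT2_eq, betaT2_eq] at h1 h2
  exact ⟨h1, h2⟩

lemma Bform_alphaT2_alphaT2 : Bform alphaT2 alphaT2 = -4 := by
  rw [alphaT2_eq]; decide

lemma Bform_alphaT2_betaT2 : Bform alphaT2 betaT2 = 2 := by
  rw [alphaT2_eq, betaT2_eq]; decide

lemma Bform_betaT2_alphaT2 : Bform betaT2 alphaT2 = 2 := by
  rw [alphaT2_eq, betaT2_eq]; decide

lemma Bform_betaT2_betaT2 : Bform betaT2 betaT2 = -4 := by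
  rw [betaT2_eq]; decide

lemma Bform_smul_add_smul_self (u w : Fin 6 → ℤ) (a b : ℤ) :
    Bform (a • u + b • w) (a • u + b • w) =
      a ^ 2 * Bform u u + 2 * a * b * Bform u w + b ^ 2 * Bform w w := by
  simp only [Bform, Pi.add_apply, Pi.smul_apply, smul_eq_mul, Finset.mul_sum,
    ← Finset.sum_neg_distrib, ← Finset.sum_add_distrib]
  exact Finset.sum_congr rfl fun i _ => by ring

lemma sq_sub_mul_add_sq_pos {R : Type*} [CommRing R] [LinearOrder R] [IsStrictOrderedRing R]
    {a b : R} (hab : a ≠ 0 ∨ b ≠ 0) : 0 < a ^ 2 - a * b + b ^ 2 := by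
  rcases hab with ha | hb
  · nlinarith [sq_nonneg (2 * b - a), sq_pos_of_ne_zero ha]
  · nlinarith [sq_nonneg (2 * a - b), sq_pos_of_ne_zero hb]

/-- The group of 2-cycles of the handlebody of `T_2` is free of rank 2, generated by
`α = x_{12}+x_{34}-x_{13}-x_{24}` and `β = x_{14}+x_{23}-x_{12}-x_{34}`, with Gram matrix
`[[-4,2],[2,-4]]`, which is negative definite. -/
theorem stmt7 :
    LinearMap.ker bdry.mulVecLin = Submodule.span ℤ {alphaT2, betaT2} ∧
    LinearIndependent ℤ ![alphaT2, betaT2] ∧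
    Bform alphaT2 alphaT2 = -4 ∧ Bform alphaT2 betaT2 = 2 ∧
    Bform betaT2 alphaT2 = 2 ∧ Bform betaT2 betaT2 = -4 ∧
    (∀ a b : ℤ, a ≠ 0 ∨ b ≠ 0 →
      Bform (a • alphaT2 + b • betaT2) (a • alphaT2 + b • betaT2) < 0) := by
  refine ⟨ker_bdry, linearIndependent_alphaT2_betaT2, Bform_alphaT2_alphaT2, Bform_alphaT2_betaT2,
    Bform_betaT2_alphaT2, Bform_betaT2_betaT2, fun a b hab => ?_⟩
  rw [Bform_smul_add_smul_self, Bform_alphaT2_alphaT2, Bform_alphaT2_betaT2, Bform_betaT2_betaT2]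
  linarith [sq_sub_mul_add_sq_pos hab]
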